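/- arXiv:0711.2190 — 2 statements merged into one kernel-verified Lean document; each statement's English description precedes it below -/
import Mathlib

section
/- Let λ > 0, δ > 0, ε > 0 with 2ε < 1, and suppose p is a monic irreducible integer polynomial of degree n with all roots in the closed disk of radius λ, such that at least δ·n of its roots lie in the open disk B(β, ε) for some β ∈ ℂ. Then δn(δn − 1) ≤ n² · log(2λ)/|log(2ε)|. -/
open MeasureTheory Polynomial Filter

noncomputable def rootsC (p : Polynomial ℤ) : Multiset ℂ :=
  (p.map (Int.castRingHom ℂ)).roots

/-!
The roots `αᵢ` of `p` are distinct, and `∏_{i ≠ j} (αᵢ - αⱼ) = ∏ᵢ p'(αᵢ) = Res(p, p')` is a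
nonzero integer, so the product of the distances `|αᵢ - αⱼ|` over ordered pairs of distinct roots
is at least `1`. If `k` roots lie in `B(β, ε)`, each of the `k(k - 1)` pairs among them contributes
at most `2ε` and each of the remaining (at most `n²`) pairs at most `2λ`, so
`1 ≤ (2ε)^{k(k-1)} (2λ)^{n²}`; take logarithms.
-/

open Finset

theorem Finset.prod_offDiag_eq_prod_prod_erase {α M : Type*} [DecidableEq α] [CommMonoid M]
    (s : Finset α) (f : α × α → M) :
    ∏ z ∈ s.offDiag, f z = ∏ a ∈ s, ∏ b ∈ s.erase a, f (a, b) :=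
  prod_finset_product _ _ _ fun z => by
    simp only [mem_offDiag, mem_erase]
    tauto

theorem Finset.prod_offDiag_norm_sub_le {E : Type*} [SeminormedAddCommGroup E]
    [DecidableEq E] {S T : Finset E} (hTS : T ⊆ S) {l ε : ℝ} {β : E}
    (hS : ∀ a ∈ S, ‖a‖ ≤ l) (hT : ∀ a ∈ T, ‖a - β‖ < ε) :
    ∏ z ∈ S.offDiag, ‖z.1 - z.2‖ ≤
      (2 * ε) ^ #T.offDiag * (2 * l) ^ #(S.offDiag \ T.offDiag) := by
  have hnear : ∀ z ∈ T.offDiag, ‖z.1 - z.2‖ ≤ 2 * ε := fun z hz => by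
    obtain ⟨h1, h2, -⟩ := mem_offDiag.mp hz
    calc ‖z.1 - z.2‖ ≤ ‖z.1 - β‖ + ‖z.2 - β‖ := by
          simpa only [dist_eq_norm] using dist_triangle_right z.1 z.2 β
      _ ≤ 2 * ε := by linarith [hT _ h1, hT _ h2]
  have hfar : ∀ z ∈ S.offDiag \ T.offDiag, ‖z.1 - z.2‖ ≤ 2 * l := fun z hz => by
    obtain ⟨h1, h2, -⟩ := mem_offDiag.mp (mem_sdiff.mp hz).1
    calc ‖z.1 - z.2‖ ≤ ‖z.1‖ + ‖z.2‖ := norm_sub_le _ _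
      _ ≤ 2 * l := by linarith [hS _ h1, hS _ h2]
  rw [← prod_sdiff (offDiag_mono hTS), mul_comm]
  have hnorm : ∀ z : E × E, 0 ≤ ‖z.1 - z.2‖ := fun _ => norm_nonneg _
  have hnear' := (prod_le_prod (fun z _ => hnorm z) hnear).trans_eq (prod_const _)
  have hfar' := (prod_le_prod (fun z _ => hnorm z) hfar).trans_eq (prod_const _)
  exact mul_le_mul hnear' hfar' (prod_nonneg fun z _ => hnorm z)
    ((prod_nonneg fun z _ => hnorm z).trans hnear')

theorem Real.mul_abs_log_le_of_one_le_pow_mul_pow {a b : ℝ} {M N : ℕ} (ha0 : 0 < a)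
    (ha1 : a < 1) (hb : 0 < b) (h : 1 ≤ a ^ M * b ^ N) : M * |Real.log a| ≤ N * Real.log b := by
  have hlog := Real.log_nonneg h
  rw [Real.log_mul (by positivity) (by positivity), Real.log_pow, Real.log_pow] at hlog
  rw [abs_of_neg (Real.log_neg ha0 ha1)]
  linarith

theorem mul_sub_one_le_natCast_mul_sub_one {x : ℝ} {k : ℕ} (hx : 0 ≤ x) (hxk : x ≤ k) :
    x * (x - 1) ≤ k * (k - 1) := by
  rcases Nat.eq_zero_or_pos k with rfl | hk
  · simp [le_antisymm hxk (by simpa using hx)]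
  · have : (1 : ℝ) ≤ k := by exact_mod_cast hk
    nlinarith

theorem Finset.card_mul_card_sub_one_le_of_one_le_prod_offDiag {E : Type*}
    [SeminormedAddCommGroup E] [DecidableEq E] {S T : Finset E} (hTS : T ⊆ S) {l ε : ℝ} {β : E}
    (hl : 1 ≤ 2 * l) (hε : 0 < ε) (hε1 : 2 * ε < 1) (hS : ∀ a ∈ S, ‖a‖ ≤ l)
    (hT : ∀ a ∈ T, ‖a - β‖ < ε) (hsep : 1 ≤ ∏ z ∈ S.offDiag, ‖z.1 - z.2‖) :
    (#T : ℝ) * (#T - 1) ≤ (#S : ℝ) ^ 2 * Real.log (2 * l) / |Real.log (2 * ε)| := by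
  have hlog := Real.mul_abs_log_le_of_one_le_pow_mul_pow (by linarith) hε1 (by linarith)
    (hsep.trans (prod_offDiag_norm_sub_le hTS hS hT))
  have hM : (#T.offDiag : ℝ) = #T * (#T - 1) := by
    rw [offDiag_card, Nat.cast_sub (Nat.le_mul_self _)]
    push_cast
    ring
  have hN : #(S.offDiag \ T.offDiag) ≤ #S ^ 2 :=
    calc #(S.offDiag \ T.offDiag) ≤ #S.offDiag := card_le_card sdiff_subset
      _ ≤ #S ^ 2 := by rw [offDiag_card, sq]; exact Nat.sub_le _ _
  rw [← hM, le_div_iff₀ (abs_pos.mpr (Real.log_neg (by linarith) hε1).ne)]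
  calc _ ≤ _ := hlog
    _ ≤ _ := mul_le_mul_of_nonneg_right (by exact_mod_cast hN) (Real.log_nonneg hl)

namespace Polynomial

theorem Monic.map_resultant_derivative {R K : Type*} [CommRing R] [Field K] [IsAlgClosed K]
    [DecidableEq K] {f : R[X]} (hf : f.Monic) (φ : R →+* K) :
    φ (resultant f (derivative f)) =
      ((f.map φ).roots.map fun a => (((f.map φ).roots.erase a).map (a - ·)).prod).prod := by
  have hsplit := IsAlgClosed.splits (f.map φ)
  rw [← resultant_map_map, ← derivative_map, ← hf.natDegree_map φ,
    resultant_eq_prod_eval _ _ _ (by rw [derivative_map]; exact natDegree_map_le) hsplit,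
    (hf.map φ).leadingCoeff, one_pow, one_mul]
  exact congrArg _ <|
    Multiset.map_congr rfl fun a ha => hsplit.eval_root_derivative (hf.map φ) ha

theorem Monic.map_resultant_derivative_eq_prod_offDiag {R K : Type*} [CommRing R] [Field K]
    [IsAlgClosed K] [DecidableEq K] {f : R[X]} (hf : f.Monic) (φ : R →+* K)
    (hnd : (f.map φ).roots.Nodup) :
    φ (resultant f (derivative f)) =
      ∏ z ∈ (f.map φ).roots.toFinset.offDiag, (z.1 - z.2) := by
  rw [hf.map_resultant_derivative, ← Multiset.toFinset_eq hnd, prod_offDiag_eq_prod_prod_erase]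
  -- a product over the finset `⟨s, hnd⟩` is by definition the multiset product over `s`
  rfl

theorem Monic.nodup_rootsC {p : ℤ[X]} (hp : p.Monic) (hirr : Irreducible p) :
    (rootsC p).Nodup := by
  have hq : Irreducible (p.map (Int.castRingHom ℚ)) := by
    simpa [algebraMap_int_eq] using
      (hp.irreducible_iff_irreducible_map_fraction_map (K := ℚ)).mp hirr
  have hmap : (p.map (Int.castRingHom ℚ)).map (algebraMap ℚ ℂ) = p.map (Int.castRingHom ℂ) := by
    rw [map_map, RingHom.ext_int ((algebraMap ℚ ℂ).comp (Int.castRingHom ℚ)) (Int.castRingHom ℂ)]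
  rw [rootsC, ← hmap]
  exact nodup_roots hq.separable.map

theorem Monic.card_rootsC {p : ℤ[X]} (hp : p.Monic) :
    Multiset.card (rootsC p) = p.natDegree := by
  rw [rootsC, ← (IsAlgClosed.splits _).natDegree_eq_card_roots, hp.natDegree_map]

theorem Monic.one_le_prod_offDiag_norm_sub_rootsC {p : ℤ[X]} (hp : p.Monic)
    (hnd : (rootsC p).Nodup) :
    1 ≤ ∏ z ∈ (rootsC p).toFinset.offDiag, ‖z.1 - z.2‖ := by
  have hres := hp.map_resultant_derivative_eq_prod_offDiag (Int.castRingHom ℂ) hnd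
  have hne : resultant p (derivative p) ≠ 0 := by
    intro h0
    rw [h0, map_zero, eq_comm, prod_eq_zero_iff] at hres
    obtain ⟨z, hz, hz0⟩ := hres
    exact (mem_offDiag.mp hz).2.2 (sub_eq_zero.mp hz0)
  rw [← norm_prod, rootsC, ← hres, eq_intCast, Complex.norm_intCast]
  exact_mod_cast Int.one_le_abs hne

end Polynomial

theorem stmt3_general (l δ ε : ℝ) (hl : 1 < 2 * l) (hδ : 0 < δ) (hε : 0 < ε)
    (hε1 : 2 * ε < 1)
    (p : Polynomial ℤ) (hp : p.Monic) (hirr : Irreducible p) (n : ℕ) (hn : p.natDegree = n)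
    (hroots : ∀ α ∈ rootsC p, ‖α‖ ≤ l) (β : ℂ)
    (hcount : δ * n ≤ ((rootsC p).filter (fun z => ‖z - β‖ < ε)).card) :
    δ * n * (δ * n - 1) ≤ (n : ℝ) ^ 2 * Real.log (2 * l) / |Real.log (2 * ε)| := by
  have hnd := hp.nodup_rootsC hirr
  set S := (rootsC p).toFinset
  set T := S.filter fun z => ‖z - β‖ < ε
  have hS : #S = n := by rw [Multiset.toFinset_card_of_nodup hnd, hp.card_rootsC, hn]
  have hT : #T = Multiset.card ((rootsC p).filter fun z => ‖z - β‖ < ε) := by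
    rw [← Multiset.toFinset_card_of_nodup (hnd.filter _), Multiset.toFinset_filter]
  calc δ * n * (δ * n - 1) ≤ #T * (#T - 1) :=
        mul_sub_one_le_natCast_mul_sub_one (by positivity) (hT ▸ hcount)
    _ ≤ (#S : ℝ) ^ 2 * Real.log (2 * l) / |Real.log (2 * ε)| :=
        card_mul_card_sub_one_le_of_one_le_prod_offDiag (filter_subset _ _) hl.le hε hε1
          (fun a ha => hroots a (Multiset.mem_toFinset.mp ha)) (fun a ha => (mem_filter.mp ha).2)
          (hp.one_le_prod_offDiag_norm_sub_rootsC hnd)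
    _ = _ := by rw [hS]

theorem stmt3 (l δ ε : ℝ) (hl0 : 0 < l) (hl : 1 < 2 * l) (hδ : 0 < δ) (hε : 0 < ε)
    (hε1 : 2 * ε < 1)
    (p : Polynomial ℤ) (hp : p.Monic) (hirr : Irreducible p) (n : ℕ) (hn : p.natDegree = n)
    (hroots : ∀ α ∈ rootsC p, ‖α‖ ≤ l) (β : ℂ)
    (hcount : δ * n ≤ ((rootsC p).filter (fun z => ‖z - β‖ < ε)).card) :
    δ * n * (δ * n - 1) ≤ (n : ℝ) ^ 2 * Real.log (2 * l) / |Real.log (2 * ε)| :=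
  stmt3_general l δ ε hl hδ hε hε1 p hp hirr n hn hroots β hcount
end

section
/- Let μ be an integer measure without atoms, witnessed by polynomials with all roots in B(0,λ) where 2λ > 1. Then there exists a constant C (one may take C = (log 2λ)^{1/2}) such that for every β ∈ ℂ and every 0 < ε < 1/2, μ(B(β,ε)) ≤ C·|log 2ε|^{−1/2}. -/
/-!
If `q ∈ ℤ[t]` is monic and irreducible, the product of `α - α'` over ordered pairs of distinct
roots is (up to sign) its discriminant, a nonzero integer, so it has absolute value at least `1`.
If `k` of the `d` roots of `q` lie in a ball of radius `ε`, the `k (k - 1)` pairs inside the ball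
contribute at most `(2ε) ^ (k (k - 1))` and all other pairs at most `(2λ) ^ (d ^ 2)`, whence
`k - 1 ≤ d (log 2λ / |log 2ε|) ^ (1/2)`.

For a general `pₙ`, apply this to each irreducible factor of degree `> D`, where the additive `1`
costs at most `deg / D`; the roots of the factors of degree `≤ D` lie in a finite set, which the
atomless limit `μ` does not charge. The portmanteau theorem then gives
`μ (B(β, ε)) ≤ 1 / D + (log 2λ) ^ (1/2) |log 2ε| ^ (-1/2)` for every `D`.
-/

open MeasureTheory Polynomial Filter

noncomputable def Delta (p : Polynomial ℤ) : Measure ℂ :=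
  (p.natDegree : ENNReal)⁻¹ • ((rootsC p).map (fun α => (Measure.dirac α))).sum

def WeakLim (μs : ℕ → Measure ℂ) (μ : Measure ℂ) : Prop :=
  ∀ f : BoundedContinuousFunction ℂ ℝ,
    Tendsto (fun n => ∫ z, f z ∂(μs n)) atTop (nhds (∫ z, f z ∂μ))

open scoped Classical ENNReal Topology

theorem Multiset.countP_bind {α β : Type*} (F : Multiset α) (g : α → Multiset β) (r : β → Prop)
    [DecidablePred r] : (F.bind g).countP r = (F.map fun a => (g a).countP r).sum := by
  simp [Multiset.countP_eq_card_filter, Multiset.filter_bind, Multiset.card_bind]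

open Finset in
theorem card_mul_card_sub_one_mul_neg_log_le {E : Type*} [PseudoMetricSpace E] [DecidableEq E]
    {R S : Finset E} {δ Δ : ℝ} (hR : 1 ≤ ∏ z ∈ R.offDiag, dist z.1 z.2) (hSR : S ⊆ R)
    (hδ : 0 < δ) (hS : ∀ x ∈ S, ∀ y ∈ S, dist x y ≤ δ) (hΔ : 1 ≤ Δ)
    (hRΔ : ∀ x ∈ R, ∀ y ∈ R, dist x y ≤ Δ) :
    (#S * (#S - 1) : ℝ) * -Real.log δ ≤ #R ^ 2 * Real.log Δ := by
  have hrest : ∏ z ∈ R.offDiag \ S.offDiag, dist z.1 z.2 ≤ Δ ^ (#R ^ 2) := by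
    calc ∏ z ∈ R.offDiag \ S.offDiag, dist z.1 z.2
        ≤ Δ ^ #(R.offDiag \ S.offDiag) := by
          rw [← prod_const]
          refine prod_le_prod (fun _ _ => dist_nonneg) fun z hz => ?_
          have hz := mem_offDiag.mp (mem_sdiff.mp hz).1
          exact hRΔ _ hz.1 _ hz.2.1
      _ ≤ Δ ^ (#R ^ 2) := by
          refine pow_le_pow_right₀ hΔ ((card_le_card sdiff_subset).trans ?_)
          rw [offDiag_card, sq]
          exact Nat.sub_le _ _
  have hsmall : ∏ z ∈ S.offDiag, dist z.1 z.2 ≤ δ ^ #S.offDiag := by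
    rw [← prod_const]
    refine prod_le_prod (fun _ _ => dist_nonneg) fun z hz => ?_
    have hz := mem_offDiag.mp hz
    exact hS _ hz.1 _ hz.2.1
  have hone : 1 ≤ Δ ^ (#R ^ 2) * δ ^ #S.offDiag := by
    calc 1 ≤ ∏ z ∈ R.offDiag, dist z.1 z.2 := hR
      _ = (∏ z ∈ R.offDiag \ S.offDiag, dist z.1 z.2) * ∏ z ∈ S.offDiag, dist z.1 z.2 :=
          (prod_sdiff (offDiag_mono hSR)).symm
      _ ≤ Δ ^ (#R ^ 2) * δ ^ #S.offDiag :=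
          mul_le_mul hrest hsmall (prod_nonneg fun _ _ => dist_nonneg) (by positivity)
  have hcard : (#S.offDiag : ℝ) = #S * (#S - 1) := by
    rw [offDiag_card, Nat.cast_sub (Nat.le_mul_self _)]
    push_cast
    ring
  have hlog := Real.log_nonneg hone
  rw [Real.log_mul (by positivity) (by positivity), Real.log_pow, Real.log_pow, hcard] at hlog
  push_cast at hlog
  linarith

theorem sub_one_le_mul_sqrt_mul_rpow {k d A L : ℝ} (hd : 0 ≤ d) (hA : 0 < A)
    (h : k * (k - 1) * A ≤ d ^ 2 * L) : k - 1 ≤ d * (√L * A ^ (-(1 / 2) : ℝ)) := by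
  rcases le_or_gt k 1 with hk | hk
  · have : 0 ≤ d * (√L * A ^ (-(1 / 2) : ℝ)) := by positivity
    linarith
  have hsq : (k - 1) ^ 2 ≤ d ^ 2 * L / A := by
    rw [le_div_iff₀ hA]
    nlinarith
  calc k - 1 ≤ √(d ^ 2 * L / A) := Real.le_sqrt_of_sq_le hsq
    _ = d * (√L * A ^ (-(1 / 2) : ℝ)) := by
      rw [Real.rpow_neg hA.le, ← Real.sqrt_eq_rpow, Real.sqrt_div' _ hA.le,
        Real.sqrt_mul (sq_nonneg d), Real.sqrt_sq hd, div_eq_mul_inv, mul_assoc]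

open UniqueFactorizationMonoid in
theorem Polynomial.Monic.exists_monic_irreducible_factors {R : Type*} [CommRing R] [IsDomain R]
    [StrongNormalizationMonoid R] [UniqueFactorizationMonoid R[X]] {P : R[X]} (hP : P.Monic) :
    ∃ F : Multiset R[X], (∀ q ∈ F, q.Monic ∧ Irreducible q) ∧ F.prod = P := by
  refine ⟨normalizedFactors P, fun q hq => ⟨?_, irreducible_of_normalized_factor q hq⟩, ?_⟩
  · have hu := hP.isUnit_leadingCoeff_of_dvd (dvd_of_mem_normalizedFactors hq)
    have := congrArg Polynomial.leadingCoeff (normalize_normalized_factor q hq)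
    rwa [leadingCoeff_normalize, normalize_eq_one.mpr hu, eq_comm] at this
  · rw [prod_normalizedFactors_eq hP.ne_zero, hP.normalize_eq_self]

theorem rootsC_multiset_prod (F : Multiset ℤ[X]) (hF : (0 : ℤ[X]) ∉ F) :
    rootsC F.prod = F.bind rootsC := by
  rw [rootsC, Polynomial.map_multiset_prod, roots_multiset_prod, Multiset.bind_map]
  · rfl
  · simpa [Multiset.mem_map, Polynomial.map_eq_zero_iff (RingHom.injective_int (Int.castRingHom ℂ))] using hF

theorem card_rootsC {p : ℤ[X]} (hp : p.Monic) : Multiset.card (rootsC p) = p.natDegree := by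
  rw [rootsC, ← (IsAlgClosed.splits _).natDegree_eq_card_roots, hp.natDegree_map]

theorem rootsC_nodup {q : ℤ[X]} (hq : q.Monic) (hirr : Irreducible q) : (rootsC q).Nodup := by
  have hsep : (q.map (Int.castRingHom ℚ)).Separable :=
    ((hq.irreducible_iff_irreducible_map_fraction_map (K := ℚ)).mp hirr).separable
  have := nodup_roots (hsep.map (f := algebraMap ℚ ℂ))
  rwa [Polynomial.map_map, RingHom.ext_int ((algebraMap ℚ ℂ).comp (Int.castRingHom ℚ))] at this

/-- The product is `∏_α q'(α) = Res(q, q')`, computed over `ℤ`. -/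
theorem exists_int_eq_prod_offDiag_rootsC {q : ℤ[X]} (hq : q.Monic) (hnd : (rootsC q).Nodup) :
    ∃ m : ℤ, (m : ℂ) = ∏ z ∈ (rootsC q).toFinset.offDiag, (z.1 - z.2) := by
  refine ⟨resultant q (derivative q) q.natDegree q.derivative.natDegree, ?_⟩
  have hsplit : (q.map (Int.castRingHom ℂ)).Splits := IsAlgClosed.splits _
  have hval : (rootsC q).toFinset.val = rootsC q := by rw [Multiset.toFinset_val, hnd.dedup]
  rw [Finset.prod_finset_product' _ _ (fun x => (rootsC q).toFinset.erase x)
    (fun z => by simp only [Finset.mem_offDiag, Finset.mem_erase]; tauto)]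
  rw [← eq_intCast (Int.castRingHom ℂ), ← resultant_map_map, ← derivative_map,
    ← hq.natDegree_map (Int.castRingHom ℂ),
    resultant_eq_prod_eval _ _ _ (by rw [derivative_map]; exact natDegree_map_le) hsplit,
    (hq.map _).leadingCoeff, one_pow, one_mul, Finset.prod_eq_multiset_prod, hval]
  refine congrArg Multiset.prod (Multiset.map_congr rfl fun x hx => ?_)
  rw [Finset.prod_eq_multiset_prod, Finset.erase_val, hval,
    hsplit.eval_root_derivative (hq.map _) hx]
  rfl

theorem one_le_prod_offDiag_dist_rootsC {q : ℤ[X]} (hq : q.Monic) (hnd : (rootsC q).Nodup) :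
    1 ≤ ∏ z ∈ (rootsC q).toFinset.offDiag, dist z.1 z.2 := by
  obtain ⟨m, hm⟩ := exists_int_eq_prod_offDiag_rootsC hq hnd
  have hm0 : m ≠ 0 := by
    rintro rfl
    obtain ⟨z, hz, hz0⟩ := Finset.prod_eq_zero_iff.mp (hm.symm.trans Int.cast_zero)
    exact (Finset.mem_offDiag.mp hz).2.2 (sub_eq_zero.mp hz0)
  simp_rw [dist_eq_norm, ← norm_prod, ← hm, Complex.norm_intCast]
  exact_mod_cast Int.one_le_abs hm0

theorem countP_rootsC_mem_ball_le_of_irreducible {q : ℤ[X]} (hq : q.Monic) (hirr : Irreducible q)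
    {l ε : ℝ} (hl : 1 ≤ 2 * l) (hε : 0 < ε) (hε2 : ε < 1 / 2)
    (hroots : ∀ α ∈ rootsC q, ‖α‖ ≤ l) (β : ℂ) :
    ((rootsC q).countP (· ∈ Metric.ball β ε) : ℝ)
      ≤ 1 + q.natDegree * (√(Real.log (2 * l)) * |Real.log (2 * ε)| ^ (-(1 / 2) : ℝ)) := by
  have hnd := rootsC_nodup hq hirr
  set R := (rootsC q).toFinset
  set S := R.filter (· ∈ Metric.ball β ε)
  have hval : R.val = rootsC q := by rw [Multiset.toFinset_val, hnd.dedup]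
  have hS : S.card = (rootsC q).countP (· ∈ Metric.ball β ε) := by
    rw [Multiset.countP_eq_card_filter, ← hval]
    rfl
  have hR : R.card = q.natDegree := by
    rw [← card_rootsC hq, ← hval]
    rfl
  have hlog : Real.log (2 * ε) < 0 := Real.log_neg (by positivity) (by linarith)
  have key := card_mul_card_sub_one_mul_neg_log_le (one_le_prod_offDiag_dist_rootsC hq hnd)
    (Finset.filter_subset (· ∈ Metric.ball β ε) R) (δ := 2 * ε) (by positivity)
    (fun x hx y hy => by
      have hx := (Finset.mem_filter.mp hx).2
      have hy := (Finset.mem_filter.mp hy).2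
      rw [Metric.mem_ball] at hx hy
      linarith [dist_triangle_right x y β])
    hl (fun x hx y hy => by
      have hx := hroots x (Multiset.mem_toFinset.mp hx)
      have hy := hroots y (Multiset.mem_toFinset.mp hy)
      linarith [dist_le_norm_add_norm x y])
  rw [hS, hR, ← abs_of_neg hlog] at key
  linarith [sub_one_le_mul_sqrt_mul_rpow (Nat.cast_nonneg _) (abs_pos.mpr hlog.ne) key]

def lowDegreeRoots (l : ℝ) (D : ℕ) : Set ℂ :=
  {z | ∃ q : ℤ[X], q.Monic ∧ q.natDegree ≤ D ∧ (∀ α ∈ rootsC q, ‖α‖ ≤ l) ∧ z ∈ rootsC q}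

theorem finite_lowDegreeRoots (l : ℝ) (D : ℕ) : (lowDegreeRoots l D).Finite := by
  set M := ⌈max l 1 ^ D * D.choose (D / 2)⌉
  refine (bUnion_roots_finite (Int.castRingHom ℂ) D (Set.finite_Icc (-M) M)).subset ?_
  rintro z ⟨q, hq, hdeg, hroots, hz⟩
  simp only [Set.mem_iUnion]
  refine ⟨q, ⟨hdeg, fun i => ?_⟩, by simpa [rootsC] using hz⟩
  have := coeff_bdd_of_roots_le _ hq (IsAlgClosed.splits _) hdeg hroots i
  rw [coeff_map, eq_intCast, Complex.norm_intCast] at this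
  rw [Set.mem_Icc, ← abs_le]
  exact_mod_cast this.trans (Int.le_ceil _)

theorem countP_rootsC_mem_ball_le_lowDegreeRoots_of_irreducible {q : ℤ[X]} (hq : q.Monic)
    (hirr : Irreducible q) {l ε : ℝ} (hl : 1 ≤ 2 * l) (hε : 0 < ε) (hε2 : ε < 1 / 2)
    (hroots : ∀ α ∈ rootsC q, ‖α‖ ≤ l) (β : ℂ) {D : ℕ} (hD : 0 < D) :
    ((rootsC q).countP (· ∈ Metric.ball β ε) : ℝ) ≤ (rootsC q).countP (· ∈ lowDegreeRoots l D)
      + q.natDegree * (1 / D + √(Real.log (2 * l)) * |Real.log (2 * ε)| ^ (-(1 / 2) : ℝ)) := by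
  set c := √(Real.log (2 * l)) * |Real.log (2 * ε)| ^ (-(1 / 2) : ℝ)
  rcases le_or_gt q.natDegree D with hdeg | hdeg
  · have hall : (rootsC q).countP (· ∈ lowDegreeRoots l D) = Multiset.card (rootsC q) :=
      Multiset.countP_eq_card.mpr fun z hz => ⟨q, hq, hdeg, hroots, hz⟩
    have hball := Multiset.countP_le_card (· ∈ Metric.ball β ε) (rootsC q)
    rw [← hall] at hball
    have : 0 ≤ (q.natDegree : ℝ) * (1 / D + c) := by positivity
    linarith [(Nat.cast_le (α := ℝ)).mpr hball]
  · have hone : 1 ≤ (q.natDegree : ℝ) * (1 / D) := by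
      rw [mul_one_div, le_div_iff₀ (by exact_mod_cast hD), one_mul]
      exact_mod_cast hdeg.le
    have := countP_rootsC_mem_ball_le_of_irreducible hq hirr hl hε hε2 hroots β
    have : (0 : ℝ) ≤ (rootsC q).countP (· ∈ lowDegreeRoots l D) := Nat.cast_nonneg _
    nlinarith

theorem countP_rootsC_mem_ball_le_lowDegreeRoots {P : ℤ[X]} (hP : P.Monic)
    {l ε : ℝ} (hl : 1 ≤ 2 * l) (hε : 0 < ε) (hε2 : ε < 1 / 2)
    (hroots : ∀ α ∈ rootsC P, ‖α‖ ≤ l) (β : ℂ) {D : ℕ} (hD : 0 < D) :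
    ((rootsC P).countP (· ∈ Metric.ball β ε) : ℝ) ≤ (rootsC P).countP (· ∈ lowDegreeRoots l D)
      + P.natDegree * (1 / D + √(Real.log (2 * l)) * |Real.log (2 * ε)| ^ (-(1 / 2) : ℝ)) := by
  obtain ⟨F, hF, rfl⟩ := hP.exists_monic_irreducible_factors
  rw [natDegree_multiset_prod_of_monic F fun q hq => (hF q hq).1,
    rootsC_multiset_prod F fun h0 => not_monic_zero (hF 0 h0).1] at *
  simp only [Multiset.countP_bind, Nat.cast_multiset_sum, Multiset.map_map, Function.comp_def,
    ← Multiset.sum_map_mul_right, ← Multiset.sum_map_add]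
  refine Multiset.sum_map_le_sum_map (α := ℝ) _ _ fun q hq => ?_
  exact countP_rootsC_mem_ball_le_lowDegreeRoots_of_irreducible (hF q hq).1 (hF q hq).2 hl hε hε2
    (fun α hα => hroots α (Multiset.mem_bind.mpr ⟨q, hq, hα⟩)) β hD

theorem Delta_apply (p : ℤ[X]) {A : Set ℂ} (hA : MeasurableSet A) :
    Delta p A = (p.natDegree : ℝ≥0∞)⁻¹ * (rootsC p).countP (· ∈ A) := by
  suffices ∀ s : Multiset ℂ, (s.map Measure.dirac).sum A = s.countP (· ∈ A) by
    rw [Delta, Measure.smul_apply, smul_eq_mul, this]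
  intro s
  induction s using Multiset.induction_on with
  | empty => simp
  | cons a s ih => by_cases ha : a ∈ A <;> simp [Measure.dirac_apply' _ hA, ih, ha, add_comm]

theorem isProbabilityMeasure_Delta {p : ℤ[X]} (hp : p.Monic) (hd : p.natDegree ≠ 0) :
    IsProbabilityMeasure (Delta p) := by
  constructor
  rw [Delta_apply p MeasurableSet.univ]
  simp only [Set.mem_univ, Multiset.countP_True]
  rw [card_rootsC hp, ENNReal.inv_mul_cancel (by exact_mod_cast hd) (ENNReal.natCast_ne_top _)]

theorem Delta_eq_zero_of_natDegree_eq_zero {p : ℤ[X]} (hd : p.natDegree = 0) : Delta p = 0 := by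
  have : rootsC p = 0 :=
    Multiset.card_eq_zero.mp (Nat.le_zero.mp ((card_roots' _).trans (hd ▸ natDegree_map_le)))
  simp [Delta, this]

theorem Delta_ball_le_lowDegreeRoots_add {P : ℤ[X]} (hP : P.Monic) (hd : P.natDegree ≠ 0)
    {l ε : ℝ} (hl : 1 ≤ 2 * l) (hε : 0 < ε) (hε2 : ε < 1 / 2)
    (hroots : ∀ α ∈ rootsC P, ‖α‖ ≤ l) (β : ℂ) {D : ℕ} (hD : 0 < D) :
    Delta P (Metric.ball β ε) ≤ Delta P (lowDegreeRoots l D)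
      + ENNReal.ofReal (1 / D + √(Real.log (2 * l)) * |Real.log (2 * ε)| ^ (-(1 / 2) : ℝ)) := by
  have hdeg : (0 : ℝ) < P.natDegree := by exact_mod_cast Nat.pos_of_ne_zero hd
  have hcount (n : ℕ) : (P.natDegree : ℝ≥0∞)⁻¹ * n = ENNReal.ofReal (n / P.natDegree) := by
    rw [ENNReal.ofReal_div_of_pos hdeg, ENNReal.ofReal_natCast, ENNReal.ofReal_natCast,
      ENNReal.div_eq_inv_mul]
  rw [Delta_apply P Metric.isOpen_ball.measurableSet,
    Delta_apply P (finite_lowDegreeRoots l D).measurableSet, hcount, hcount,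
    ← ENNReal.ofReal_add (by positivity) (by positivity)]
  refine ENNReal.ofReal_le_ofReal ?_
  rw [div_add' _ _ _ hdeg.ne', div_le_div_iff_of_pos_right hdeg]
  linarith [countP_rootsC_mem_ball_le_lowDegreeRoots hP hl hε hε2 hroots β hD]

theorem ProbabilityMeasure.measure_le_of_tendsto_of_le_add {Ω ι : Type*} {L : Filter ι}
    [L.NeBot] [MeasurableSpace Ω] [TopologicalSpace Ω] [OpensMeasurableSpace Ω]
    [HasOuterApproxClosed Ω] {μ : ProbabilityMeasure Ω} {μs : ι → ProbabilityMeasure Ω}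
    (hlim : Tendsto μs L (𝓝 μ)) {G F : Set Ω} (hG : IsOpen G) (hF : IsClosed F)
    (hF0 : (μ : Measure Ω) F = 0) {c : ℝ≥0∞}
    (hle : ∀ᶠ i in L, (μs i : Measure Ω) G ≤ (μs i : Measure Ω) F + c) :
    (μ : Measure Ω) G ≤ c := by
  have hFlim : Tendsto (fun i => (μs i : Measure Ω) F) L (𝓝 0) := by
    rw [← hF0]
    exact ProbabilityMeasure.tendsto_measure_of_null_frontier_of_tendsto' hlim
      (measure_mono_null hF.frontier_subset hF0)
  calc (μ : Measure Ω) G ≤ L.liminf fun i => (μs i : Measure Ω) G :=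
        ProbabilityMeasure.le_liminf_measure_open_of_tendsto hlim hG
    _ ≤ L.liminf fun i => (μs i : Measure Ω) F + c := liminf_le_liminf hle
    _ = c := by simpa using (hFlim.add_const c).liminf_eq

theorem eventually_natDegree_ne_zero_of_weakLim {p : ℕ → ℤ[X]} {μ : Measure ℂ}
    [IsProbabilityMeasure μ] (hw : WeakLim (fun n => Delta (p n)) μ) :
    ∀ᶠ n in atTop, (p n).natDegree ≠ 0 := by
  have hone := hw (BoundedContinuousFunction.const ℂ 1)
  simp only [BoundedContinuousFunction.const_apply, integral_const, smul_eq_mul, mul_one,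
    probReal_univ] at hone
  filter_upwards [hone.eventually_ne one_ne_zero] with n hn hd
  simp [Delta_eq_zero_of_natDegree_eq_zero hd] at hn

theorem stmt8 (μ : Measure ℂ) (hμ : IsProbabilityMeasure μ) (p : ℕ → Polynomial ℤ) (l : ℝ)
    (hl : 1 < 2 * l)
    (hm : ∀ n, (p n).Monic) (hb : ∀ n, ∀ α ∈ rootsC (p n), ‖α‖ ≤ l)
    (hw : WeakLim (fun n => Delta (p n)) μ)
    (hatomless : ∀ z : ℂ, μ {z} = 0) :
    ∃ C : ℝ, C = Real.sqrt (Real.log (2 * l)) ∧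
      ∀ (β : ℂ) (ε : ℝ), 0 < ε → ε < 1 / 2 →
        μ (Metric.ball β ε) ≤ ENNReal.ofReal (C * |Real.log (2 * ε)| ^ (-(1/2) : ℝ)) := by
  refine ⟨_, rfl, fun β ε hε hε2 => ?_⟩
  set c := √(Real.log (2 * l)) * |Real.log (2 * ε)| ^ (-(1 / 2) : ℝ)
  have : NullSingletonClass μ := ⟨hatomless⟩
  obtain ⟨N, hN⟩ := eventually_atTop.mp (eventually_natDegree_ne_zero_of_weakLim hw)
  let ν (n : ℕ) : ProbabilityMeasure ℂ :=
    ⟨Delta (p (n + N)), isProbabilityMeasure_Delta (hm _) (hN _ (Nat.le_add_left N n))⟩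
  have hν : Tendsto ν atTop (𝓝 ⟨μ, hμ⟩) :=
    ProbabilityMeasure.tendsto_iff_forall_integral_tendsto.2 fun f =>
      (hw f).comp (tendsto_add_atTop_nat N)
  have hD (D : ℕ) (hD : 0 < D) : μ (Metric.ball β ε) ≤ ENNReal.ofReal (1 / D + c) :=
    ProbabilityMeasure.measure_le_of_tendsto_of_le_add hν Metric.isOpen_ball
      (finite_lowDegreeRoots l D).isClosed ((finite_lowDegreeRoots l D).measure_zero μ)
      (Eventually.of_forall fun n => Delta_ball_le_lowDegreeRoots_add (hm _)
        (hN _ (Nat.le_add_left N n)) hl.le hε hε2 (hb _) β hD)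
  have hlim : Tendsto (fun D : ℕ => ENNReal.ofReal (1 / D + c)) atTop (𝓝 (ENNReal.ofReal c)) := by
    have := tendsto_one_div_atTop_nhds_zero_nat.add_const c
    rw [zero_add] at this
    exact (ENNReal.continuous_ofReal.tendsto c).comp this
  exact ge_of_tendsto hlim (eventually_atTop.mpr ⟨1, hD⟩)
end
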